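/- Let B = B_R(x₀) ⊂ ℝ³ be an open ball, k > 0, and let η₀, δ₁, δ, N₁, N′, C₁, λ be positive constants; set C′ = 1/N′. Assume C′η₀ > C₁k² and C′C₁k²/(C′η₀ − C₁k²) < λ/(k²N₁²) − 1/δ₁. Then there exists c > 0, depending only on k, η₀, δ₁, N₁, N′, C₁ and λ, such that: for every twice continuously differentiable u : ℝ³ → ℂ satisfying the trace inequality ∫_{∂B} |∂_ν u|² dμH² ≤ C₁ ∫_B |Δu|² dx and the Poincaré inequality ∫_B ‖∇u‖² dx ≥ λ ∫_B |u|² dx, for every measurable η : ∂B → ℝ with η ≥ η₀, and for all measurable n₁, n₂ : B → ℝ with δ₁ ≤ n₁ ≤ N₁ and δ ≤ n₁ − n₂ ≤ N′ on B, one has ∫_B (n₁ − n₂)^{−1} |Δu + k²n₁u|² dx + k² ∫_B ‖∇u‖² dx − k⁴ ∫_B n₁ |u|² dx − ∫_{∂B} (k²/η) |∂_ν u|² dμH² ≥ c ∫_B |Δu|² dx. (This is the coercivity of the interior transmission form under the condition n₁ − n₂ > 0, η > δ₂ > 0, with the smallness condition 0 < C′C₁(Ω)k²/(C′ inf η − C₁(Ω)k²)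 < λ₁(Ω)/(k² (sup n₁)²) − 1/inf n₁.) -/

import Mathlib

/-! Young's inequality `t/(1+t) |Δu|² ≤ |Δu + k²n₁u|² + t |k²n₁u|²` and `(n₁ - n₂)⁻¹ ≥ 1/N'`
bound the first volume term below by `t/(N'(1+t)) ∫|Δu|²` minus `(t/N' + 1/δ₁) k⁴N₁² ∫|u|²`
(using `n₁ ≤ n₁²/δ₁` for the `k⁴∫n₁|u|²` term). For `t = N'(λ/(k²N₁²) - 1/δ₁)` the Poincaré
inequality makes `k²∫‖∇u‖²` absorb the `|u|²` terms, while the trace inequality bounds the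
boundary term by `(C₁k²/η₀) ∫|Δu|²`; the smallness condition says exactly that
`t/(N'(1+t)) > C₁k²/η₀` for this `t`.

The boundary estimate needs `|∂_ν u|²` to be `μH[2]`-integrable on the sphere; it is, because the
sphere, a Lipschitz image of a square under spherical coordinates, has finite `μH[2]`-measure. -/

noncomputable section

open Real MeasureTheory Metric

/-- Euclidean space `ℝ³`. -/
abbrev E3 := EuclideanSpace ℝ (Fin 3)

/-- The Laplacian (sum of second partial derivatives). -/
def lap (f : E3 → ℂ) (x : E3) : ℂ :=
  ∑ i : Fin 3, fderiv ℝ (fun y => fderiv ℝ f y (EuclideanSpace.single i 1)) x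
    (EuclideanSpace.single i 1)

/-- The squared norm of the gradient: `‖∇u‖² = Σᵢ |∂ᵢu|²`. -/
def gradSq (f : E3 → ℂ) (x : E3) : ℝ :=
  ∑ i : Fin 3, ‖fderiv ℝ f x (EuclideanSpace.single i 1)‖ ^ 2

open Set Bornology

def sphericalCoords (p : Fin 2 → ℝ) : E3 :=
  !₂[sin (p 0) * cos (p 1), sin (p 0) * sin (p 1), cos (p 0)]

lemma exists_eq_norm_smul_sphericalCoords (y : E3) :
    ∃ p ∈ Icc (fun _ => -π) (fun _ => π), y = ‖y‖ • sphericalCoords p := by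
  rcases eq_or_ne y 0 with rfl | hy
  · exact ⟨0, ⟨fun _ => by simp [pi_pos.le], fun _ => by simp [pi_pos.le]⟩, by simp⟩
  have hr : 0 < ‖y‖ := norm_pos_iff.2 hy
  set z : ℂ := ⟨y 0, y 1⟩
  have hnorm : ‖y‖ ^ 2 = ‖z‖ ^ 2 + y 2 ^ 2 := by
    rw [EuclideanSpace.norm_sq_eq, Fin.sum_univ_three, Complex.sq_norm, Complex.normSq_apply]
    simp only [Fin.isValue, norm_eq_abs, sq_abs, add_left_inj, z]
    ring
  have hcos : ‖y‖ * cos (arccos (y 2 / ‖y‖)) = y 2 := by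
    obtain ⟨hlo, hhi⟩ := abs_le_of_sq_le_sq' (a := y 2) (by nlinarith [sq_nonneg ‖z‖]) hr.le
    rw [cos_arccos (by rwa [le_div_iff₀ hr, neg_one_mul]) (by rwa [div_le_one hr])]
    field_simp
  have hsin : ‖y‖ * sin (arccos (y 2 / ‖y‖)) = ‖z‖ := by
    have : 1 - (y 2 / ‖y‖) ^ 2 = (‖z‖ / ‖y‖) ^ 2 := by field_simp; linarith
    rw [sin_arccos, this, sqrt_sq (by positivity), mul_div_cancel₀ _ hr.ne']
  refine ⟨![arccos (y 2 / ‖y‖), z.arg], ⟨fun i => ?_, fun i => ?_⟩, ?_⟩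
  · fin_cases i
    · simp only [Fin.zero_eta, Fin.isValue, Matrix.cons_val_zero]
      linarith [arccos_nonneg (y 2 / ‖y‖), pi_pos]
    · simpa using (Complex.neg_pi_lt_arg z).le
  · fin_cases i
    · simpa using arccos_le_pi _
    · simpa using Complex.arg_le_pi z
  · ext i
    fin_cases i
    · simp [sphericalCoords, ← mul_assoc, hsin, Complex.norm_mul_cos_arg, z]
    · simp [sphericalCoords, ← mul_assoc, hsin, Complex.norm_mul_sin_arg, z]
    · simp [sphericalCoords, hcos]

lemma contDiff_sphericalCoords : ContDiff ℝ 1 sphericalCoords := by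
  refine contDiff_piLp' 2 fun i => ?_
  fin_cases i <;>
    simp only [sphericalCoords, Fin.isValue, Fin.zero_eta, Fin.mk_one, Fin.reduceFinMk,
      Matrix.cons_val_zero, Matrix.cons_val_one, Matrix.cons_val] <;> fun_prop

lemma sphere_subset_image_sphericalCoords (x₀ : E3) (R : ℝ) :
    sphere x₀ R ⊆ (fun p => x₀ + R • sphericalCoords p) '' Icc (fun _ => -π) (fun _ => π) := by
  intro x hx
  obtain ⟨p, hp, hxp⟩ := exists_eq_norm_smul_sphericalCoords (x - x₀)
  refine ⟨p, hp, ?_⟩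
  rw [mem_sphere_iff_norm.1 hx] at hxp
  simp [← hxp]

theorem hausdorffMeasure_sphere_lt_top (x₀ : E3) (R : ℝ) : μH[2] (sphere x₀ R) < ⊤ := by
  have hf : ContDiff ℝ 1 fun p => x₀ + R • sphericalCoords p := by
    have := contDiff_sphericalCoords; fun_prop
  obtain ⟨K, hK⟩ := hf.contDiffOn.exists_lipschitzOnWith one_ne_zero (convex_Icc _ _) isCompact_Icc
  have hvol : (μH[2] : Measure (Fin 2 → ℝ)) = volume := by
    simpa using hausdorffMeasure_pi_real (ι := Fin 2)
  calc μH[2] (sphere x₀ R)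
      ≤ μH[2] ((fun p => x₀ + R • sphericalCoords p) '' Icc (fun _ => -π) (fun _ => π)) :=
        measure_mono (sphere_subset_image_sphericalCoords x₀ R)
    _ ≤ K ^ (2 : ℝ) * μH[2] (Icc (fun (_ : Fin 2) => -π) (fun _ => π)) :=
        hK.hausdorffMeasure_image_le zero_le_two
    _ < ⊤ := by
        rw [hvol]
        exact ENNReal.mul_lt_top (by simp) isCompact_Icc.measure_lt_top

lemma integrableOn_sphere_of_continuous {F : Type*} [NormedAddCommGroup F] {f : E3 → F}
    (hf : Continuous f) (x₀ : E3) (R : ℝ) : IntegrableOn f (sphere x₀ R) μH[2] := by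
  obtain ⟨C, hC⟩ := (isCompact_sphere x₀ R).exists_bound_of_continuousOn hf.continuousOn
  exact Measure.integrableOn_of_bounded (hausdorffMeasure_sphere_lt_top x₀ R).ne
    hf.aestronglyMeasurable (ae_restrict_of_forall_mem isClosed_sphere.measurableSet hC)

lemma mul_norm_sq_le_norm_add_sq_add_norm_sq {E : Type*} [SeminormedAddCommGroup E] (a b : E)
    {t : ℝ} (ht : 0 ≤ t) : t * ‖a‖ ^ 2 ≤ (1 + t) * (‖a + b‖ ^ 2 + t * ‖b‖ ^ 2) := by
  have hab : ‖a‖ ≤ ‖a + b‖ + ‖b‖ := by simpa using norm_sub_le (a + b) b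
  calc t * ‖a‖ ^ 2 ≤ t * (‖a + b‖ + ‖b‖) ^ 2 := by gcongr
    _ ≤ (1 + t) * (‖a + b‖ ^ 2 + t * ‖b‖ ^ 2) := by nlinarith [sq_nonneg (‖a + b‖ - t * ‖b‖)]

lemma transmission_integrand_lower_bound (L w : ℂ) {k n d C' t δ₁ N₁ : ℝ} (hC' : 0 ≤ C')
    (hd : C' ≤ d⁻¹) (ht : 0 ≤ t) (hδ₁ : 0 < δ₁) (hn : δ₁ ≤ n) (hnN : n ≤ N₁) :
    C' * t / (1 + t) * ‖L‖ ^ 2 - (C' * t + 1 / δ₁) * k ^ 4 * N₁ ^ 2 * ‖w‖ ^ 2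
      ≤ d⁻¹ * ‖L + (k : ℂ) ^ 2 * n * w‖ ^ 2 - k ^ 4 * n * ‖w‖ ^ 2 := by
  have hn0 : 0 < n := hδ₁.trans_le hn
  have hb : ‖(k : ℂ) ^ 2 * n * w‖ ^ 2 = k ^ 4 * n ^ 2 * ‖w‖ ^ 2 := by
    simp only [norm_mul, norm_pow, Complex.norm_real, Real.norm_eq_abs, abs_of_pos hn0, mul_pow,
      sq_abs, ← pow_mul]
  have hyoung := mul_norm_sq_le_norm_add_sq_add_norm_sq L ((k : ℂ) ^ 2 * n * w) ht
  rw [hb] at hyoung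
  have hweighted : C' * t / (1 + t) * ‖L‖ ^ 2
      ≤ C' * ‖L + (k : ℂ) ^ 2 * n * w‖ ^ 2 + C' * t * (k ^ 4 * n ^ 2 * ‖w‖ ^ 2) := by
    rw [div_mul_eq_mul_div, div_le_iff₀ (by linarith)]
    nlinarith [mul_le_mul_of_nonneg_left hyoung hC']
  have hn_le : n ≤ 1 / δ₁ * N₁ ^ 2 := by
    rw [one_div_mul_eq_div, le_div_iff₀ hδ₁]; nlinarith
  have hw : 0 ≤ k ^ 4 * ‖w‖ ^ 2 := by positivity
  have hsq : n ^ 2 ≤ N₁ ^ 2 := pow_le_pow_left₀ hn0.le hnN 2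
  have h1 := mul_le_mul_of_nonneg_left hsq (mul_nonneg (mul_nonneg hC' ht) hw)
  have h2 := mul_le_mul_of_nonneg_left hn_le hw
  have h3 := mul_le_mul_of_nonneg_right hd (sq_nonneg ‖L + (k : ℂ) ^ 2 * n * w‖)
  linarith

lemma ContDiff.continuous_lap {u : E3 → ℂ} (hu : ContDiff ℝ 2 u) : Continuous (lap u) := by
  refine continuous_finsetSum _ fun i _ => ?_
  have hi : ContDiff ℝ 1 fun y => fderiv ℝ u y (EuclideanSpace.single i 1) :=
    (hu.fderiv_right (by norm_num)).clm_apply contDiff_const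
  exact (hi.continuous_fderiv one_ne_zero).clm_apply continuous_const

lemma Continuous.integrableOn_of_isBounded {X F : Type*} [MetricSpace X] [ProperSpace X]
    [MeasurableSpace X] [OpensMeasurableSpace X] [NormedAddCommGroup F] {μ : Measure X}
    [IsFiniteMeasureOnCompacts μ] {f : X → F} (hf : Continuous f) {s : Set X}
    (hs : IsBounded s) : IntegrableOn f s μ :=
  (hf.continuousOn.integrableOn_compact hs.isCompact_closure).mono_set subset_closure

lemma transmission_volume_terms_ge {s : Set E3} (hs : MeasurableSet s) (hsb : IsBounded s)
    {u : E3 → ℂ} (hu : ContDiff ℝ 2 u) {n₁ n₂ : E3 → ℝ} (hn₁m : Measurable n₁)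
    (hn₂m : Measurable n₂) {k δ₁ δ N₁ N' t : ℝ} (hδ₁ : 0 < δ₁) (hδ : 0 < δ) (ht : 0 ≤ t)
    (hn₁ : ∀ x ∈ s, δ₁ ≤ n₁ x ∧ n₁ x ≤ N₁)
    (hnd : ∀ x ∈ s, δ ≤ n₁ x - n₂ x ∧ n₁ x - n₂ x ≤ N') :
    1 / N' * t / (1 + t) * (∫ x in s, ‖lap u x‖ ^ 2)
        - (1 / N' * t + 1 / δ₁) * k ^ 4 * N₁ ^ 2 * (∫ x in s, ‖u x‖ ^ 2)
      ≤ (∫ x in s, (n₁ x - n₂ x)⁻¹ * ‖lap u x + (k : ℂ) ^ 2 * (n₁ x : ℂ) * u x‖ ^ 2)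
        - k ^ 4 * ∫ x in s, n₁ x * ‖u x‖ ^ 2 := by
  have hLc := hu.continuous_lap
  have huc := hu.continuous
  have iL : IntegrableOn (fun x => ‖lap u x‖ ^ 2) s :=
    (hLc.norm.pow 2).integrableOn_of_isBounded hsb
  have iu : IntegrableOn (fun x => ‖u x‖ ^ 2) s :=
    (huc.norm.pow 2).integrableOn_of_isBounded hsb
  have iP : IntegrableOn (fun x => n₁ x * ‖u x‖ ^ 2) s := by
    refine (iu.const_mul N₁).mono' (by fun_prop) (ae_restrict_of_forall_mem hs fun x hx => ?_)
    have hpos : 0 < n₁ x := hδ₁.trans_le (hn₁ x hx).1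
    rw [norm_mul, Real.norm_of_nonneg hpos.le, Real.norm_of_nonneg (by positivity)]
    exact mul_le_mul_of_nonneg_right (hn₁ x hx).2 (by positivity)
  have iI : IntegrableOn
      (fun x => (n₁ x - n₂ x)⁻¹ * ‖lap u x + (k : ℂ) ^ 2 * (n₁ x : ℂ) * u x‖ ^ 2) s := by
    have hdom : IntegrableOn (fun x => δ⁻¹ * (‖lap u x‖ + k ^ 2 * N₁ * ‖u x‖) ^ 2) s :=
      (by fun_prop : Continuous _).integrableOn_of_isBounded hsb
    refine hdom.mono' (by fun_prop) (ae_restrict_of_forall_mem hs fun x hx => ?_)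
    have hpos : 0 < n₁ x := hδ₁.trans_le (hn₁ x hx).1
    have hnorm : ‖lap u x + (k : ℂ) ^ 2 * (n₁ x : ℂ) * u x‖ ≤ ‖lap u x‖ + k ^ 2 * N₁ * ‖u x‖ := by
      calc ‖lap u x + (k : ℂ) ^ 2 * (n₁ x : ℂ) * u x‖
          ≤ ‖lap u x‖ + ‖(k : ℂ) ^ 2 * (n₁ x : ℂ) * u x‖ := norm_add_le _ _
        _ = ‖lap u x‖ + k ^ 2 * n₁ x * ‖u x‖ := by
          rw [norm_mul, norm_mul, norm_pow, Complex.norm_real, Complex.norm_real,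
            Real.norm_eq_abs, Real.norm_of_nonneg hpos.le, sq_abs]
        _ ≤ ‖lap u x‖ + k ^ 2 * N₁ * ‖u x‖ := by gcongr; exact (hn₁ x hx).2
    rw [norm_mul, norm_inv, Real.norm_of_nonneg (by linarith [(hnd x hx).1]), norm_pow, norm_norm]
    gcongr
    · exact (hnd x hx).1
  have hpt : ∀ x ∈ s, 1 / N' * t / (1 + t) * ‖lap u x‖ ^ 2
        - (1 / N' * t + 1 / δ₁) * k ^ 4 * N₁ ^ 2 * ‖u x‖ ^ 2
      ≤ (n₁ x - n₂ x)⁻¹ * ‖lap u x + (k : ℂ) ^ 2 * (n₁ x : ℂ) * u x‖ ^ 2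
        - k ^ 4 * (n₁ x * ‖u x‖ ^ 2) := fun x hx => by
    have hd := hnd x hx
    have hd0 : 0 < n₁ x - n₂ x := hδ.trans_le hd.1
    rw [← mul_assoc]
    exact transmission_integrand_lower_bound _ _ (one_div_pos.2 (hd0.trans_le hd.2)).le
      (by rw [one_div]; exact inv_anti₀ hd0 hd.2) ht hδ₁ (hn₁ x hx).1 (hn₁ x hx).2
  have hint := setIntegral_mono_on ((iL.const_mul _).sub (iu.const_mul _))
    (iI.sub (iP.const_mul _)) hs hpt
  simp only [Pi.sub_apply] at hint
  rwa [integral_sub (iL.const_mul _) (iu.const_mul _), integral_sub iI (iP.const_mul _),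
    integral_const_mul, integral_const_mul, integral_const_mul] at hint

lemma setIntegral_div_mul_le {α : Type*} [MeasurableSpace α] {μ : Measure α} {s : Set α}
    (hs : MeasurableSet s) {f η : α → ℝ} (hf : IntegrableOn f s μ) (hf0 : ∀ x ∈ s, 0 ≤ f x)
    {a η₀ : ℝ} (ha : 0 ≤ a) (hη₀ : 0 < η₀) (hη : ∀ x ∈ s, η₀ ≤ η x) :
    ∫ x in s, a / η x * f x ∂μ ≤ a / η₀ * ∫ x in s, f x ∂μ := by
  rw [← integral_const_mul]
  refine integral_mono_of_nonneg (ae_restrict_of_forall_mem hs fun x hx => ?_) (hf.const_mul _)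
    (ae_restrict_of_forall_mem hs fun x hx => ?_)
  · have := hη₀.trans_le (hη x hx)
    exact mul_nonneg (by positivity) (hf0 x hx)
  · exact mul_le_mul_of_nonneg_right (div_le_div_of_nonneg_left ha hη₀ (hη x hx)) (hf0 x hx)

lemma exists_young_parameter {k η₀ δ₁ N₁ N' C₁ lam : ℝ} (hk : 0 < k) (hη₀ : 0 < η₀)
    (hN₁ : 0 < N₁) (hN' : 0 < N') (hC₁ : 0 < C₁) (hgap : 1 / N' * η₀ > C₁ * k ^ 2)
    (hsmall : 1 / N' * C₁ * k ^ 2 / (1 / N' * η₀ - C₁ * k ^ 2)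
      < lam / (k ^ 2 * N₁ ^ 2) - 1 / δ₁) :
    ∃ t ≥ 0, C₁ * k ^ 2 / η₀ < 1 / N' * t / (1 + t) ∧
      (1 / N' * t + 1 / δ₁) * k ^ 4 * N₁ ^ 2 = lam * k ^ 2 := by
  set M := lam / (k ^ 2 * N₁ ^ 2) - 1 / δ₁
  have hA : 0 < 1 / N' * η₀ - C₁ * k ^ 2 := sub_pos.2 hgap
  have hM : 1 / N' * C₁ * k ^ 2 < M * (1 / N' * η₀ - C₁ * k ^ 2) := (div_lt_iff₀ hA).1 hsmall
  have hM0 : 0 < M := lt_of_le_of_lt (by positivity) hsmall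
  refine ⟨N' * M, by positivity, ?_, ?_⟩
  · rw [div_lt_div_iff₀ hη₀ (by positivity)]
    field_simp at hM ⊢
    nlinarith
  · simp only [M]
    field_simp
    ring

theorem interior_transmission_coercive_eta_positive (x₀ : E3)
    (R k η₀ δ₁ δ N₁ N' C₁ lam : ℝ) (hk : 0 < k) (hη₀ : 0 < η₀)
    (hδ₁ : 0 < δ₁) (hδ : 0 < δ) (hN₁ : 0 < N₁) (hN' : 0 < N') (hC₁ : 0 < C₁)
    (hgap : (1 / N') * η₀ > C₁ * k ^ 2)
    (hsmall : (1 / N') * C₁ * k ^ 2 / ((1 / N') * η₀ - C₁ * k ^ 2)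
      < lam / (k ^ 2 * N₁ ^ 2) - 1 / δ₁) :
    ∃ c > 0, ∀ u : E3 → ℂ, ContDiff ℝ 2 u →
      ((∫ x in sphere x₀ R, ‖fderiv ℝ u x (R⁻¹ • (x - x₀))‖ ^ 2 ∂(μH[(2 : ℝ)]))
        ≤ C₁ * ∫ x in ball x₀ R, ‖lap u x‖ ^ 2) →
      (lam * ∫ x in ball x₀ R, ‖u x‖ ^ 2 ≤ ∫ x in ball x₀ R, gradSq u x) →
      ∀ η : E3 → ℝ, Measurable η → (∀ x ∈ sphere x₀ R, η₀ ≤ η x) →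
      ∀ n₁ n₂ : E3 → ℝ, Measurable n₁ → Measurable n₂ →
        (∀ x ∈ ball x₀ R, δ₁ ≤ n₁ x ∧ n₁ x ≤ N₁) →
        (∀ x ∈ ball x₀ R, δ ≤ n₁ x - n₂ x ∧ n₁ x - n₂ x ≤ N') →
        c * ∫ x in ball x₀ R, ‖lap u x‖ ^ 2 ≤
          (∫ x in ball x₀ R, (n₁ x - n₂ x)⁻¹
              * ‖lap u x + (k : ℂ) ^ 2 * (n₁ x : ℂ) * u x‖ ^ 2)
            + k ^ 2 * (∫ x in ball x₀ R, gradSq u x)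
            - k ^ 4 * (∫ x in ball x₀ R, n₁ x * ‖u x‖ ^ 2)
            - (∫ x in sphere x₀ R,
                (k ^ 2 / η x) * ‖fderiv ℝ u x (R⁻¹ • (x - x₀))‖ ^ 2 ∂(μH[(2 : ℝ)])) := by
  obtain ⟨t, ht, hc, hcoef⟩ := exists_young_parameter hk hη₀ hN₁ hN' hC₁ hgap hsmall
  refine ⟨1 / N' * t / (1 + t) - C₁ * k ^ 2 / η₀, sub_pos.2 hc, ?_⟩
  intro u hu htrace hpoincare η _ hη n₁ n₂ hn₁m hn₂m hn₁ hnd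
  have hvolume := transmission_volume_terms_ge measurableSet_ball isBounded_ball hu hn₁m hn₂m
    hδ₁ hδ ht hn₁ hnd (k := k)
  have hnormal : Continuous fun x => ‖fderiv ℝ u x (R⁻¹ • (x - x₀))‖ ^ 2 := by
    have := hu.continuous_fderiv two_ne_zero; fun_prop
  have hboundary := setIntegral_div_mul_le isClosed_sphere.measurableSet
    (integrableOn_sphere_of_continuous hnormal x₀ R) (fun _ _ => sq_nonneg _) (sq_nonneg k) hη₀ hη
  have htrace' := mul_le_mul_of_nonneg_left htrace (by positivity : 0 ≤ k ^ 2 / η₀)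
  have hpoincare' := mul_le_mul_of_nonneg_left hpoincare (sq_nonneg k)
  rw [hcoef] at hvolume
  linear_combination hvolume + hboundary + htrace' + hpoincare'
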